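/- Let s be a complex number with Re(s) > 0 and s ≠ 1. Then there exists a constant M > 0 such that for every integer k ≥ 2, | ζ(s) - Σ_{n=1}^{k-1} n^{-s} + k^{1-s}/(1-s) - (1/2)·k^{-s} | ≤ M · k^{-Re(s)-1}. -/

import Mathlib

open Complex Finset intervalIntegral

noncomputable def zd (s : ℂ) (j : ℕ) : ℂ :=
  (((j : ℂ) + 1) ^ (1 - s) - (j : ℂ) ^ (1 - s)) / (1 - s)
    - ((j : ℂ) ^ (-s) + ((j : ℂ) + 1) ^ (-s)) / 2

lemma hasDerivAt_real_cpow' (c : ℂ) {t : ℝ} (ht : 0 < t) :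
    HasDerivAt (fun y : ℝ => (y : ℂ) ^ c) (c * (t : ℂ) ^ (c - 1)) t := by
  have h : HasDerivAt (fun z : ℂ => z ^ c) (c * (t : ℂ) ^ (c - 1) * 1) (t : ℂ) :=
    (hasDerivAt_id ((t : ℝ) : ℂ)).cpow_const (by simp [Complex.mem_slitPlane_iff, ht])
  simpa using h.comp_ofReal

lemma zd_bound (s : ℂ) (hs : s ≠ 1) (hre : 0 ≤ s.re) (j : ℕ) (hj : 1 ≤ j) :
    ‖zd s j‖ ≤ ‖s‖ * ‖s + 1‖ * (j : ℝ) ^ (-s.re - 2) := by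
  set a : ℝ := (j : ℝ) with ha
  have ha1 : 1 ≤ a := by rw [ha]; exact_mod_cast hj
  have ha0 : 0 < a := lt_of_lt_of_le one_pos ha1
  set C : ℝ := ‖s‖ * ‖s + 1‖ * (j : ℝ) ^ (-s.re - 2) with hC
  have hC0 : 0 ≤ C := by positivity
  set g : ℝ → ℂ := fun t => (t : ℂ) ^ (-s) with hg
  set g' : ℝ → ℂ := fun t => (-s) * (t : ℂ) ^ (-s - 1) with hg'
  set u : ℝ → ℂ := fun t => (t : ℂ) - (a + 1 / 2 : ℝ) with hu
  have hIcc : Set.uIcc a (a + 1) = Set.Icc a (a + 1) := Set.uIcc_of_le (by linarith)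
  have hpos : ∀ t ∈ Set.Icc a (a + 1), (0 : ℝ) < t := fun t htt => lt_of_lt_of_le ha0 htt.1
  -- derivative facts
  have hgd : ∀ t ∈ Set.Icc a (a + 1), HasDerivAt g (g' t) t := by
    intro t htt
    simpa [hg'] using hasDerivAt_real_cpow' (-s) (hpos t htt)
  have hg'd : ∀ t ∈ Set.Icc a (a + 1), HasDerivAt g' ((-s) * ((-s - 1) * (t : ℂ) ^ (-s - 2)) ) t := by
    intro t htt
    have := (hasDerivAt_real_cpow' (-s - 1) (hpos t htt)).const_mul (-s)
    have h2 : -s - 1 - 1 = -s - 2 := by ring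
    rw [h2] at this
    exact this
  have hg'cont : ContinuousOn g' (Set.Icc a (a + 1)) :=
    fun t htt => ((hg'd t htt).continuousAt).continuousWithinAt
  have hgcont : ContinuousOn g (Set.Icc a (a + 1)) :=
    fun t htt => ((hgd t htt).continuousAt).continuousWithinAt
  have hint_g' : IntervalIntegrable g' MeasureTheory.volume a (a + 1) :=
    (hg'cont.mono (by rw [hIcc])).intervalIntegrable
  -- Step 1 : integral of g
  have hstep1 : ∫ t in a..(a + 1), g t
      = (((a : ℂ) + 1) ^ (1 - s) - (a : ℂ) ^ (1 - s)) / (1 - s) := by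
    have h0 : (0 : ℝ) ∉ Set.uIcc a (a + 1) := by
      rw [hIcc]; intro h0; exact absurd h0.1 (by linarith)
    have := integral_cpow (a := a) (b := a + 1) (r := -s)
      (Or.inr ⟨fun h => hs (by simpa using neg_injective h), h0⟩)
    rw [hg]
    convert this using 2 <;> push_cast <;> ring_nf
  -- Step 2 : integration by parts
  have hud : ∀ t ∈ Set.uIcc a (a + 1), HasDerivAt u (1 : ℂ) t := by
    intro t _
    have : HasDerivAt (fun y : ℝ => (y : ℂ)) 1 t := by
      simpa using (hasDerivAt_id t).ofReal_comp
    simpa [hu] using this.sub_const (((a + 1 / 2 : ℝ)) : ℂ)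
  have hint_g : IntervalIntegrable g MeasureTheory.volume a (a + 1) :=
    (hgcont.mono (by rw [hIcc])).intervalIntegrable
  have hucont : ContinuousOn u (Set.Icc a (a + 1)) := by
    apply Continuous.continuousOn
    exact (Complex.continuous_ofReal).sub continuous_const
  have hint_ug' : IntervalIntegrable (fun t => u t * g' t) MeasureTheory.volume a (a + 1) :=
    ((hucont.mul hg'cont).mono (by rw [hIcc])).intervalIntegrable
  have hIBP : (∫ t in a..(a + 1), ((1 : ℂ) * g t + u t * g' t))
      = u (a + 1) * g (a + 1) - u a * g a := by
    apply integral_deriv_mul_eq_sub (u' := fun _ => (1 : ℂ)) (v' := g')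
    · exact hud
    · intro t htt; exact hgd t (by rwa [hIcc] at htt)
    · exact intervalIntegrable_const
    · exact hint_g'
  have hIBP2 : (∫ t in a..(a + 1), g t) + (∫ t in a..(a + 1), u t * g' t)
      = u (a + 1) * g (a + 1) - u a * g a := by
    rw [← hIBP, ← intervalIntegral.integral_add hint_g hint_ug']
    apply intervalIntegral.integral_congr
    intro t _; ring
  have hua : u a = -(1 / 2) := by simp only [hu]; push_cast; ring
  have hua1 : u (a + 1) = 1 / 2 := by simp only [hu]; push_cast; ring
  have hzd : zd s j = -∫ t in a..(a + 1), u t * g' t := by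
    have hga : g a = (j : ℂ) ^ (-s) := by rw [hg, ha]; push_cast; rfl
    have hga1 : g (a + 1) = ((j : ℂ) + 1) ^ (-s) := by rw [hg, ha]; push_cast; rfl
    have h1 : (∫ t in a..(a + 1), u t * g' t)
        = u (a + 1) * g (a + 1) - u a * g a - ∫ t in a..(a + 1), g t := by
      rw [← hIBP2]; ring
    rw [zd, h1, hstep1, hua, hua1, hga, hga1, ha]
    push_cast
    ring
  -- Step 3 : integral of u is zero
  have hintu : (∫ t in a..(a + 1), u t) = 0 := by
    have h1 : (fun t : ℝ => u t) = fun t : ℝ => ((t - (a + 1 / 2) : ℝ) : ℂ) := by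
      funext t; rw [hu]; push_cast; ring
    rw [h1, intervalIntegral.integral_ofReal]
    have h2 : (∫ t in a..(a + 1), (t - (a + 1 / 2))) = 0 := by
      rw [intervalIntegral.integral_sub intervalIntegrable_id intervalIntegrable_const,
        integral_id, intervalIntegral.integral_const]
      simp; ring
    rw [h2]; simp
  have hsplit2 : (∫ t in a..(a + 1), u t * g' t)
      = ∫ t in a..(a + 1), u t * (g' t - g' a) := by
    have hint1 : IntervalIntegrable (fun t => u t * (g' t - g' a)) MeasureTheory.volume a (a + 1) :=
      ((hucont.mul (hg'cont.sub continuousOn_const)).mono (by rw [hIcc])).intervalIntegrable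
    have hint2 : IntervalIntegrable (fun t => u t * g' a) MeasureTheory.volume a (a + 1) :=
      ((hucont.mul continuousOn_const).mono (by rw [hIcc])).intervalIntegrable
    have h3 : (∫ t in a..(a + 1), u t * g' t)
        = (∫ t in a..(a + 1), (u t * (g' t - g' a) + u t * g' a)) := by
      apply intervalIntegral.integral_congr; intro t _; ring
    rw [h3, intervalIntegral.integral_add hint1 hint2, intervalIntegral.integral_mul_const,
      hintu]
    simp
  -- Step 4 : pointwise bound
  have hub : ∀ t ∈ Set.uIoc a (a + 1), ‖u t * (g' t - g' a)‖ ≤ 1 / 2 * C := by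
    intro t ht
    rw [Set.uIoc_of_le (by linarith)] at ht
    have htmem : t ∈ Set.Icc a (a + 1) := ⟨ht.1.le, ht.2⟩
    have hu_le : ‖u t‖ ≤ 1 / 2 := by
      have h1 : u t = ((t - (a + 1 / 2) : ℝ) : ℂ) := by rw [hu]; push_cast; ring
      rw [h1, Complex.norm_real, Real.norm_eq_abs, abs_le]
      constructor <;> [linarith [ht.1.le]; linarith [ht.2]]
    have hg'_le : ‖g' t - g' a‖ ≤ C := by
      have hmvt := Convex.norm_image_sub_le_of_norm_hasDerivWithin_le
        (f := g') (f' := fun x => (-s) * ((-s - 1) * (x : ℂ) ^ (-s - 2))) (C := C)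
        (fun x hx => (hg'd x hx).hasDerivWithinAt)
        (fun x hx => by
          have hx0 : (0 : ℝ) < x := hpos x hx
          have h1 : ‖(-s) * ((-s - 1) * (x : ℂ) ^ (-s - 2))‖
              = ‖s‖ * (‖s + 1‖ * x ^ ((-s - 2).re)) := by
            rw [norm_mul, norm_mul, norm_neg,
              Complex.norm_cpow_eq_rpow_re_of_pos hx0]
            congr 2
            rw [show -s - 1 = -(s + 1) by ring, norm_neg]
          rw [h1]
          have h2 : (-s - 2).re = -s.re - 2 := by simp
          have h3 : x ^ ((-s - 2).re) ≤ a ^ (-s.re - 2) := by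
            rw [h2]
            exact Real.rpow_le_rpow_of_nonpos ha0 hx.1 (by linarith)
          rw [hC, ← ha]
          calc ‖s‖ * (‖s + 1‖ * x ^ ((-s - 2).re))
              ≤ ‖s‖ * (‖s + 1‖ * a ^ (-s.re - 2)) := by
                apply mul_le_mul_of_nonneg_left _ (norm_nonneg _)
                exact mul_le_mul_of_nonneg_left h3 (norm_nonneg _)
            _ = _ := by ring)
        (convex_Icc a (a + 1)) (Set.left_mem_Icc.mpr (by linarith)) htmem
      calc ‖g' t - g' a‖ ≤ C * ‖t - a‖ := hmvt
        _ ≤ C * 1 := by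
            apply mul_le_mul_of_nonneg_left _ hC0
            rw [Real.norm_eq_abs, abs_le]; constructor <;> [linarith [ht.1.le]; linarith [ht.2]]
        _ = C := mul_one C
    calc ‖u t * (g' t - g' a)‖ = ‖u t‖ * ‖g' t - g' a‖ := norm_mul _ _
      _ ≤ 1 / 2 * C := mul_le_mul hu_le hg'_le (norm_nonneg _) (by norm_num)
  have hnorm := intervalIntegral.norm_integral_le_of_norm_le_const hub
  rw [show a + 1 - a = 1 by ring] at hnorm
  have : ‖zd s j‖ ≤ 1 / 2 * C := by
    rw [hzd, norm_neg, hsplit2]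
    simpa using hnorm
  linarith

lemma rpow_claim {b : ℝ} (hb : 0 < b) {x : ℝ} (hx : 1 ≤ x) :
    b * (x + 1) ^ (-b - 1) ≤ x ^ (-b) - (x + 1) ^ (-b) := by
  have hx0 : 0 < x := lt_of_lt_of_le one_pos hx
  have h0 : (0 : ℝ) ∉ Set.uIcc x (x + 1) := by
    rw [Set.uIcc_of_le (by linarith)]; intro h; exact absurd h.1 (by linarith)
  have hr : (-b - 1 : ℝ) ≠ -1 := by intro h; apply hb.ne'; linarith [sub_eq_neg_self.mp h]
  have hint := integral_rpow (a := x) (b := x + 1) (r := -b - 1) (Or.inr ⟨hr, h0⟩)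
  have hintegrable : IntervalIntegrable (fun t : ℝ => t ^ (-b - 1)) MeasureTheory.volume x (x + 1) := by
    apply ContinuousOn.intervalIntegrable
    intro t htt
    apply (Real.continuousAt_rpow_const t _ _).continuousWithinAt
    · left; intro h; rw [Set.uIcc_of_le (by linarith)] at htt; rw [h] at htt
      exact absurd htt.1 (by linarith)
  have hmono := intervalIntegral.integral_mono_on (by linarith : x ≤ x + 1)
    intervalIntegrable_const hintegrable
    (fun t htt => by
      exact Real.rpow_le_rpow_of_nonpos (lt_of_lt_of_le hx0 htt.1) htt.2 (by linarith))
  rw [intervalIntegral.integral_const, hint] at hmono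
  simp only [add_sub_cancel_left, one_smul] at hmono
  have hb' : -b - 1 + 1 = -b := by ring
  rw [hb'] at hmono
  have := mul_le_mul_of_nonneg_left hmono hb.le
  calc b * (x + 1) ^ (-b - 1) ≤ b * (((x + 1) ^ (-b) - x ^ (-b)) / (-b)) := this
    _ = x ^ (-b) - (x + 1) ^ (-b) := by
        generalize (x + 1 : ℝ) ^ (-b) = p
        generalize (x : ℝ) ^ (-b) = q
        have hb0 : b ≠ 0 := hb.ne'
        rw [div_neg, mul_neg, ← mul_div_assoc, mul_comm b (p - q), mul_div_assoc,
          div_self hb0, mul_one]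
        ring

lemma tail_sum_le {b : ℝ} (hb : 0 < b) (k : ℕ) (hk : 1 ≤ k) :
    ∑' j : ℕ, ((k + j : ℕ) : ℝ) ^ (-b - 1) ≤ (1 + 1 / b) * (k : ℝ) ^ (-b) := by
  have hk1 : (1 : ℝ) ≤ (k : ℝ) := by exact_mod_cast hk
  have key : ∀ N, ∑ j ∈ Finset.range N, ((k + j : ℕ) : ℝ) ^ (-b - 1)
      ≤ (k : ℝ) ^ (-b - 1) + (k : ℝ) ^ (-b) / b := by
    intro N
    cases N with
    | zero => simp; positivity
    | succ M =>
      rw [Finset.sum_range_succ']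
      have h0 : ((k + 0 : ℕ) : ℝ) ^ (-b - 1) = (k : ℝ) ^ (-b - 1) := by norm_num
      rw [h0]
      have hterm : ∀ i, ((k + (i + 1) : ℕ) : ℝ) ^ (-b - 1)
          ≤ (1 / b) * (((k + i : ℕ) : ℝ) ^ (-b) - ((k + (i + 1) : ℕ) : ℝ) ^ (-b)) := by
        intro i
        have hx : (1 : ℝ) ≤ ((k + i : ℕ) : ℝ) := by
          have : (1 : ℕ) ≤ k + i := le_trans hk (Nat.le_add_right _ _)
          exact_mod_cast this
        have hcast : ((k + (i + 1) : ℕ) : ℝ) = ((k + i : ℕ) : ℝ) + 1 := by push_cast; ring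
        rw [hcast]
        have := rpow_claim hb hx
        rw [div_mul_eq_mul_div, le_div_iff₀ hb, mul_comm]
        linarith
      calc ∑ i ∈ Finset.range M, ((k + (i + 1) : ℕ) : ℝ) ^ (-b - 1) + (k : ℝ) ^ (-b - 1)
          ≤ (∑ i ∈ Finset.range M, (1 / b) * (((k + i : ℕ) : ℝ) ^ (-b)
              - ((k + (i + 1) : ℕ) : ℝ) ^ (-b))) + (k : ℝ) ^ (-b - 1) := by
            gcongr with i _
            exact hterm i
        _ = (1 / b) * (((k + 0 : ℕ) : ℝ) ^ (-b) - ((k + M : ℕ) : ℝ) ^ (-b)) + (k : ℝ) ^ (-b - 1) := by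
            rw [← Finset.mul_sum]
            congr 1
            rw [Finset.sum_range_sub' (f := fun i => ((k + i : ℕ) : ℝ) ^ (-b))]
        _ ≤ (1 / b) * ((k : ℝ) ^ (-b)) + (k : ℝ) ^ (-b - 1) := by
            have h1 : (0 : ℝ) ≤ ((k + M : ℕ) : ℝ) ^ (-b) := Real.rpow_nonneg (by positivity) _
            have h2 : ((k + 0 : ℕ) : ℝ) ^ (-b) = (k : ℝ) ^ (-b) := by norm_num
            rw [h2]
            have : (0:ℝ) ≤ 1/b := by positivity
            nlinarith
        _ = (k : ℝ) ^ (-b - 1) + (k : ℝ) ^ (-b) / b := by ring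
  have htsum := Real.tsum_le_of_sum_range_le
    (fun n => Real.rpow_nonneg (by positivity) _) key
  have hle : (k : ℝ) ^ (-b - 1) ≤ (k : ℝ) ^ (-b) :=
    Real.rpow_le_rpow_of_exponent_le hk1 (by linarith)
  have heq : (1 + 1 / b) * (k : ℝ) ^ (-b) = (k : ℝ) ^ (-b) + (k : ℝ) ^ (-b) / b := by
    field_simp
  linarith

lemma summable_zd_norm (s : ℂ) (hs : s ≠ 1) (hre : 0 < s.re) (k : ℕ) (hk : 1 ≤ k) :
    Summable (fun j : ℕ => ‖zd s (k + j)‖) := by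
  apply Summable.of_nonneg_of_le (fun j => norm_nonneg _)
    (fun j => zd_bound s hs hre.le (k + j) (le_trans hk (Nat.le_add_right _ _)))
  apply Summable.mul_left
  have h1 : Summable (fun n : ℕ => (n : ℝ) ^ (-s.re - 2)) :=
    Real.summable_nat_rpow.mpr (by linarith)
  have h2 := (summable_nat_add_iff (f := fun n : ℕ => (n : ℝ) ^ (-s.re - 2)) k).mpr h1
  exact h2.congr (fun j => by rw [add_comm])

noncomputable def Tt (s : ℂ) (k : ℕ) : ℂ := ∑' j : ℕ, zd s (k + j)

lemma summable_zd (s : ℂ) (hs : s ≠ 1) (hre : 0 < s.re) (k : ℕ) (hk : 1 ≤ k) :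
    Summable (fun j : ℕ => zd s (k + j)) := by
  apply Summable.of_norm
  simpa using summable_zd_norm s hs hre k hk

lemma T_bound (s : ℂ) (hs : s ≠ 1) (hre : 0 < s.re) (k : ℕ) (hk : 1 ≤ k) :
    ‖Tt s k‖
      ≤ (‖s‖ * ‖s + 1‖ * (1 + 1 / (s.re + 1))) * (k : ℝ) ^ (-s.re - 1) := by
  have hsumn := summable_zd_norm s hs hre k hk
  have hsumb : Summable (fun j : ℕ => ‖s‖ * ‖s + 1‖
      * ((k + j : ℕ) : ℝ) ^ (-s.re - 2)) := by
    apply Summable.mul_left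
    have h1 : Summable (fun n : ℕ => (n : ℝ) ^ (-s.re - 2)) :=
      Real.summable_nat_rpow.mpr (by linarith)
    exact ((summable_nat_add_iff (f := fun n : ℕ => (n : ℝ) ^ (-s.re - 2)) k).mpr h1).congr
      (fun j => by rw [add_comm])
  have h1 : ‖Tt s k‖ ≤ ∑' j : ℕ, ‖zd s (k + j)‖ := by
    rw [Tt]
    exact norm_tsum_le_tsum_norm (by simpa using hsumn)
  have h2 : ∑' j : ℕ, ‖zd s (k + j)‖
      ≤ ∑' j : ℕ, ‖s‖ * ‖s + 1‖ * ((k + j : ℕ) : ℝ) ^ (-s.re - 2) :=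
    Summable.tsum_le_tsum (fun j => zd_bound s hs hre.le (k + j) (le_trans hk (Nat.le_add_right _ _)))
      hsumn hsumb
  have h3 : ∑' j : ℕ, ‖s‖ * ‖s + 1‖ * ((k + j : ℕ) : ℝ) ^ (-s.re - 2)
      = ‖s‖ * ‖s + 1‖ * ∑' j : ℕ, ((k + j : ℕ) : ℝ) ^ (-s.re - 2) :=
    tsum_mul_left
  have h4 : ∑' j : ℕ, ((k + j : ℕ) : ℝ) ^ (-s.re - 2)
      ≤ (1 + 1 / (s.re + 1)) * (k : ℝ) ^ (-s.re - 1) := by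
    have := tail_sum_le (b := s.re + 1) (by linarith) k hk
    have he1 : -(s.re + 1) - 1 = -s.re - 2 := by ring
    have he2 : -(s.re + 1) = -s.re - 1 := by ring
    rw [he1, he2] at this
    exact this
  calc ‖Tt s k‖ ≤ _ := h1
    _ ≤ _ := h2
    _ = _ := h3
    _ ≤ ‖s‖ * ‖s + 1‖ * ((1 + 1 / (s.re + 1)) * (k : ℝ) ^ (-s.re - 1)) := by
        apply mul_le_mul_of_nonneg_left h4 (by positivity)
    _ = _ := by ring

lemma T_succ (s : ℂ) (hs : s ≠ 1) (hre : 0 < s.re) (k : ℕ) (hk : 1 ≤ k) :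
    Tt s k = zd s k + Tt s (k + 1) := by
  have hsum := summable_zd s hs hre k hk
  rw [Tt, Summable.tsum_eq_zero_add hsum]
  have h0 : k + 0 = k := by omega
  rw [h0]
  congr 1
  rw [Tt]
  apply tsum_congr
  intro j
  congr 1
  omega

noncomputable def Zk (s : ℂ) (k : ℕ) : ℂ :=
  (∑ n ∈ Finset.Icc 1 (k - 1), (n : ℂ) ^ (-s)) - (k : ℂ) ^ (1 - s) / (1 - s)
    + (1 / 2) * (k : ℂ) ^ (-s)

lemma Zk_succ (s : ℂ) (hs : s ≠ 1) (k : ℕ) (hk : 1 ≤ k) :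
    Zk s (k + 1) = Zk s k - zd s k := by
  obtain ⟨m, rfl⟩ : ∃ m, k = m + 1 := ⟨k - 1, by omega⟩
  rw [Zk, Zk, zd]
  have h1 : m + 1 + 1 - 1 = m + 1 := by omega
  have h2 : m + 1 - 1 = m := by omega
  rw [h1, h2]
  rw [Finset.sum_Icc_succ_top (by omega : 1 ≤ m + 1)]
  have h1s : (1 : ℂ) - s ≠ 0 := by
    intro h; exact hs (by linear_combination -h)
  push_cast
  field_simp
  ring

lemma ZT_const (s : ℂ) (hs : s ≠ 1) (hre : 0 < s.re) :
    ∀ k, 2 ≤ k → Zk s k - Tt s k = Zk s 2 - Tt s 2 := by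
  intro k hk
  induction k with
  | zero => omega
  | succ n ih =>
    by_cases h : 2 ≤ n
    · have hZ := Zk_succ s hs n (by omega)
      have hT : Tt s (n + 1) = Tt s n - zd s n := by
        have := T_succ s hs hre n (by omega)
        rw [this]; ring
      rw [hZ, hT]
      linear_combination ih h
    · have hn : n + 1 = 2 := by omega
      rw [hn]

lemma tendsto_nat_cpow_zero {c : ℂ} (hc : c.re < 0) :
    Filter.Tendsto (fun k : ℕ => (k : ℂ) ^ c) Filter.atTop (nhds 0) := by
  rw [tendsto_zero_iff_norm_tendsto_zero]
  have h1 : Filter.Tendsto (fun x : ℝ => x ^ c.re) Filter.atTop (nhds 0) := by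
    have := tendsto_rpow_neg_atTop (by linarith : (0 : ℝ) < -c.re)
    simpa using this
  have h2 := h1.comp (tendsto_natCast_atTop_atTop (R := ℝ))
  apply h2.congr'
  filter_upwards [Filter.eventually_ge_atTop 1] with k hk
  have hk0 : (0 : ℝ) < (k : ℝ) := by exact_mod_cast Nat.lt_of_lt_of_le Nat.zero_lt_one hk
  rw [Function.comp_apply,
    show ((k : ℕ) : ℂ) = (((k : ℕ) : ℝ) : ℂ) from by push_cast; rfl,
    Complex.norm_cpow_eq_rpow_re_of_pos hk0]

lemma sum_Icc_eq_sum_range (s : ℂ) (hs0 : s ≠ 0) (k : ℕ) (hk : 1 ≤ k) :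
    ∑ n ∈ Finset.Icc 1 (k - 1), (n : ℂ) ^ (-s) = ∑ n ∈ Finset.range k, 1 / (n : ℂ) ^ s := by
  have hIccIco : Finset.Icc 1 (k - 1) = Finset.Ico 1 k := by
    ext n; simp only [Finset.mem_Icc, Finset.mem_Ico]; omega
  rw [hIccIco, Finset.range_eq_Ico, ← Finset.sum_Ico_consecutive _ (Nat.zero_le 1) hk]
  have h0 : ∑ n ∈ Finset.Ico (0 : ℕ) 1, 1 / (n : ℂ) ^ s = 0 := by
    rw [Nat.Ico_zero_eq_range, Finset.sum_range_one]
    simp [Complex.zero_cpow hs0]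
  rw [h0, zero_add]
  apply Finset.sum_congr rfl
  intro n _
  rw [Complex.cpow_neg, one_div]

lemma tendsto_Zk (s : ℂ) (hs1 : 1 < s.re) :
    Filter.Tendsto (fun k : ℕ => Zk s k) Filter.atTop (nhds (riemannZeta s)) := by
  have hs0 : s ≠ 0 := by intro h; rw [h] at hs1; simp at hs1; linarith
  have hsum : Summable (fun n : ℕ => 1 / (n : ℂ) ^ s) :=
    Complex.summable_one_div_nat_cpow.mpr hs1
  have hzeta : Filter.Tendsto (fun N => ∑ n ∈ Finset.range N, 1 / (n : ℂ) ^ s)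
      Filter.atTop (nhds (riemannZeta s)) := by
    rw [zeta_eq_tsum_one_div_nat_cpow hs1]
    exact hsum.hasSum.tendsto_sum_nat
  have hA : Filter.Tendsto (fun k : ℕ => ∑ n ∈ Finset.Icc 1 (k - 1), (n : ℂ) ^ (-s))
      Filter.atTop (nhds (riemannZeta s)) := by
    apply hzeta.congr'
    filter_upwards [Filter.eventually_ge_atTop 1] with k hk
    exact (sum_Icc_eq_sum_range s hs0 k hk).symm
  have hB : Filter.Tendsto (fun k : ℕ => (k : ℂ) ^ (1 - s) / (1 - s)) Filter.atTop (nhds 0) := by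
    have := (tendsto_nat_cpow_zero (c := 1 - s) (by simp; linarith)).div_const (1 - s)
    simpa using this
  have hC : Filter.Tendsto (fun k : ℕ => (1 / 2 : ℂ) * (k : ℂ) ^ (-s)) Filter.atTop (nhds 0) := by
    have := (tendsto_nat_cpow_zero (c := -s) (by simp; linarith)).const_mul (1 / 2 : ℂ)
    simpa using this
  have h3 := (hA.sub hB).add hC
  rw [sub_zero, add_zero] at h3
  exact h3.congr fun k => rfl

lemma tendsto_T (s : ℂ) (hs : s ≠ 1) (hre : 0 < s.re) :
    Filter.Tendsto (fun k : ℕ => Tt s k) Filter.atTop (nhds 0) := by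
  have h1 : Filter.Tendsto (fun x : ℝ => x ^ (-s.re - 1)) Filter.atTop (nhds 0) := by
    have := tendsto_rpow_neg_atTop (by linarith : (0 : ℝ) < s.re + 1)
    apply this.congr; intro x; congr 1; ring
  have h2 : Filter.Tendsto (fun k : ℕ => (‖s‖ * ‖s + 1‖
      * (1 + 1 / (s.re + 1))) * (k : ℝ) ^ (-s.re - 1)) Filter.atTop (nhds 0) := by
    have := (h1.comp (tendsto_natCast_atTop_atTop (R := ℝ))).const_mul
      (‖s‖ * ‖s + 1‖ * (1 + 1 / (s.re + 1)))
    simpa using this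
  refine squeeze_zero_norm' ?_ h2
  filter_upwards [Filter.eventually_ge_atTop 1] with k hk
  exact T_bound s hs hre k hk

lemma zeta_eq_W (s : ℂ) (hs1 : 1 < s.re) : riemannZeta s = Zk s 2 - Tt s 2 := by
  have hs : s ≠ 1 := by intro h; rw [h] at hs1; simp at hs1
  have hre : 0 < s.re := by linarith
  have h1 : Filter.Tendsto (fun k : ℕ => Zk s k - Tt s k) Filter.atTop
      (nhds (riemannZeta s - 0)) := (tendsto_Zk s hs1).sub (tendsto_T s hs hre)
  rw [sub_zero] at h1
  have h2 : Filter.Tendsto (fun _ : ℕ => Zk s 2 - Tt s 2) Filter.atTop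
      (nhds (Zk s 2 - Tt s 2)) := tendsto_const_nhds
  apply tendsto_nhds_unique _ h2
  apply h1.congr'
  filter_upwards [Filter.eventually_ge_atTop 2] with k hk
  exact ZT_const s hs hre k hk

def Uset : Set ℂ := {z : ℂ | 0 < z.re ∧ z ≠ 1}

lemma hUo : IsOpen Uset := by
  have h1 : IsOpen {z : ℂ | 0 < z.re} := continuous_re.isOpen_preimage _ isOpen_Ioi
  exact h1.inter isOpen_compl_singleton

lemma hUp : IsPreconnected Uset := by
  have hC1 : Convex ℝ {z : ℂ | 0 < z.re ∧ z.re < 1} :=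
    (convex_halfSpace_re_gt 0).inter (convex_halfSpace_re_lt 1)
  have hC2 : Convex ℝ {z : ℂ | 1 < z.re} := convex_halfSpace_re_gt 1
  have hC3 : Convex ℝ {z : ℂ | 0 < z.re ∧ 0 < z.im} :=
    (convex_halfSpace_re_gt 0).inter (convex_halfSpace_im_gt 0)
  have hC4 : Convex ℝ {z : ℂ | 0 < z.re ∧ z.im < 0} :=
    (convex_halfSpace_re_gt 0).inter (convex_halfSpace_im_lt 0)
  have hA : IsPreconnected ({z : ℂ | 0 < z.re ∧ 0 < z.im} ∪ {z : ℂ | 0 < z.re ∧ z.re < 1}) := by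
    apply IsPreconnected.union ((1 / 2 : ℂ) + (1 / 2 : ℂ) * I)
    · constructor <;> simp <;> norm_num
    · constructor <;> simp <;> norm_num
    · exact hC3.isPreconnected
    · exact hC1.isPreconnected
  have hB : IsPreconnected (({z : ℂ | 0 < z.re ∧ 0 < z.im} ∪ {z : ℂ | 0 < z.re ∧ z.re < 1})
      ∪ {z : ℂ | 0 < z.re ∧ z.im < 0}) := by
    apply IsPreconnected.union ((1 / 2 : ℂ) - (1 / 2 : ℂ) * I)
    · right; constructor <;> simp <;> norm_num
    · constructor <;> simp <;> norm_num
    · exact hA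
    · exact hC4.isPreconnected
  have hD : IsPreconnected ((({z : ℂ | 0 < z.re ∧ 0 < z.im} ∪ {z : ℂ | 0 < z.re ∧ z.re < 1})
      ∪ {z : ℂ | 0 < z.re ∧ z.im < 0}) ∪ {z : ℂ | 1 < z.re}) := by
    apply IsPreconnected.union ((2 : ℂ) + I)
    · left; left; constructor <;> simp
    · simp
    · exact hB
    · exact hC2.isPreconnected
  convert hD using 1
  ext z
  simp only [Uset, Set.mem_setOf_eq, Set.mem_union]
  constructor
  · rintro ⟨hre, hne⟩
    rcases lt_trichotomy z.im 0 with him | him | him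
    · exact Or.inl (Or.inr ⟨hre, him⟩)
    · rcases lt_trichotomy z.re 1 with hr | hr | hr
      · exact Or.inl (Or.inl (Or.inr ⟨hre, hr⟩))
      · exact absurd (Complex.ext hr him) hne
      · exact Or.inr hr
    · exact Or.inl (Or.inl (Or.inl ⟨hre, him⟩))
  · rintro (((⟨h1, h2⟩ | ⟨h1, h2⟩) | ⟨h1, h2⟩) | h1)
    · exact ⟨h1, fun h => by rw [h] at h2; simp at h2⟩
    · exact ⟨h1, fun h => by rw [h] at h2; simp at h2⟩
    · exact ⟨h1, fun h => by rw [h] at h2; simp at h2⟩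
    · refine ⟨by linarith, fun h => by rw [h] at h1; simp at h1⟩

lemma diff_zd (j : ℕ) (hj : 1 ≤ j) {z : ℂ} (hz : z ≠ 1) :
    DifferentiableAt ℂ (fun w => zd w j) z := by
  have hj0 : (j : ℂ) ≠ 0 := Nat.cast_ne_zero.mpr (by omega)
  have hj1 : (j : ℂ) + 1 ≠ 0 := by
    have : ((j + 1 : ℕ) : ℂ) ≠ 0 := Nat.cast_ne_zero.mpr (by omega)
    push_cast at this; exact this
  have h1z : (1 : ℂ) - z ≠ 0 := by
    intro h; exact hz (by linear_combination -h)
  have hd1 : DifferentiableAt ℂ (fun w : ℂ => (1 : ℂ) - w) z :=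
    (differentiable_const _).differentiableAt.sub differentiable_id.differentiableAt
  have hdneg : DifferentiableAt ℂ (fun w : ℂ => -w) z := differentiable_neg.differentiableAt
  apply DifferentiableAt.sub
  · exact ((hd1.const_cpow (Or.inl hj1)).sub (hd1.const_cpow (Or.inl hj0))).div
      hd1 h1z
  · exact ((hdneg.const_cpow (Or.inl hj0)).add (hdneg.const_cpow (Or.inl hj1))).div_const 2

lemma diff_W : DifferentiableOn ℂ (fun z => Zk z 2 - Tt z 2) Uset := by
  apply DifferentiableOn.sub
  · intro z hz
    apply DifferentiableAt.differentiableWithinAt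
    have h1z : (1 : ℂ) - z ≠ 0 := by
      intro h; exact hz.2 (by linear_combination -h)
    have hd1 : DifferentiableAt ℂ (fun w : ℂ => (1 : ℂ) - w) z :=
      (differentiable_const _).differentiableAt.sub differentiable_id.differentiableAt
    have hdneg : DifferentiableAt ℂ (fun w : ℂ => -w) z := differentiable_neg.differentiableAt
    apply DifferentiableAt.add
    · apply DifferentiableAt.sub
      · apply DifferentiableAt.fun_sum
        intro n hn
        rw [Finset.mem_Icc] at hn
        exact hdneg.const_cpow (Or.inl (Nat.cast_ne_zero.mpr (by omega)))
      · exact (hd1.const_cpow (Or.inl two_ne_zero)).div hd1 h1z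
    · exact (hdneg.const_cpow (Or.inl two_ne_zero)).const_mul _
  · apply TendstoLocallyUniformlyOn.differentiableOn
      (F := fun N z => ∑ j ∈ Finset.range N, zd z (2 + j)) (φ := Filter.atTop)
    · rw [tendstoLocallyUniformlyOn_iff_forall_isCompact hUo]
      intro K hKU hK
      rcases K.eq_empty_or_nonempty with rfl | hne
      · exact tendstoUniformlyOn_empty
      · obtain ⟨z₀, hz₀K, hz₀min⟩ := hK.exists_isMinOn hne continuous_re.continuousOn
        obtain ⟨z₁, hz₁K, hz₁max⟩ := hK.exists_isMaxOn hne
          ((continuous_norm.mul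
            (continuous_norm.comp (continuous_id.add continuous_const))).continuousOn)
        have hε : 0 < z₀.re := (hKU hz₀K).1
        apply tendstoUniformlyOn_tsum_nat
          (u := fun j => (‖z₁‖ * ‖z₁ + 1‖) * ((2 + j : ℕ) : ℝ) ^ (-z₀.re - 2))
        · apply Summable.mul_left
          have h1 : Summable (fun n : ℕ => (n : ℝ) ^ (-z₀.re - 2)) :=
            Real.summable_nat_rpow.mpr (by linarith)
          exact ((summable_nat_add_iff (f := fun n : ℕ => (n : ℝ) ^ (-z₀.re - 2)) 2).mpr h1).congr
            (fun j => by rw [add_comm])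
        · intro j z hz
          have hzU := hKU hz
          have h1 := zd_bound z hzU.2 hzU.1.le (2 + j) (by omega)
          refine le_trans h1 ?_
          have hbase : (1 : ℝ) ≤ ((2 + j : ℕ) : ℝ) := by
            have : (1 : ℕ) ≤ 2 + j := by omega
            exact_mod_cast this
          have hre_le : z₀.re ≤ z.re := isMinOn_iff.mp hz₀min z hz
          have hrpow : ((2 + j : ℕ) : ℝ) ^ (-z.re - 2) ≤ ((2 + j : ℕ) : ℝ) ^ (-z₀.re - 2) :=
            Real.rpow_le_rpow_of_exponent_le hbase (by linarith)
          have habss : ‖z‖ * ‖z + 1‖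
              ≤ ‖z₁‖ * ‖z₁ + 1‖ := isMaxOn_iff.mp hz₁max z hz
          calc ‖z‖ * ‖z + 1‖ * ((2 + j : ℕ) : ℝ) ^ (-z.re - 2)
              ≤ ‖z‖ * ‖z + 1‖ * ((2 + j : ℕ) : ℝ) ^ (-z₀.re - 2) := by
                apply mul_le_mul_of_nonneg_left hrpow (by positivity)
            _ ≤ ‖z₁‖ * ‖z₁ + 1‖ * ((2 + j : ℕ) : ℝ) ^ (-z₀.re - 2) := by
                apply mul_le_mul_of_nonneg_right habss (Real.rpow_nonneg (by positivity) _)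
    · apply Filter.Eventually.of_forall
      intro N z hz
      apply DifferentiableAt.differentiableWithinAt
      apply DifferentiableAt.fun_sum
      intro j _
      exact diff_zd (2 + j) (by omega) hz.2
    · exact hUo

lemma zeta_eq_W_on (s : ℂ) (h1 : 0 < s.re) (h2 : s ≠ 1) :
    riemannZeta s = Zk s 2 - Tt s 2 := by
  have hf : AnalyticOnNhd ℂ riemannZeta Uset :=
    DifferentiableOn.analyticOnNhd
      (fun z hz => (differentiableAt_riemannZeta hz.2).differentiableWithinAt) hUo
  have hg : AnalyticOnNhd ℂ (fun z => Zk z 2 - Tt z 2) Uset :=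
    DifferentiableOn.analyticOnNhd diff_W hUo
  have h2U : (2 : ℂ) ∈ Uset := by constructor <;> simp
  have hV : {z : ℂ | 1 < z.re} ∈ nhds (2 : ℂ) :=
    (continuous_re.isOpen_preimage _ isOpen_Ioi).mem_nhds (by simp)
  have hfg : riemannZeta =ᶠ[nhds (2 : ℂ)] (fun z => Zk z 2 - Tt z 2) :=
    Filter.eventually_of_mem hV (fun z hz => zeta_eq_W z hz)
  exact hf.eqOn_of_preconnected_of_eventuallyEq hg hUp h2U hfg ⟨h1, h2⟩

theorem stmt_11 (s : ℂ) (h1 : 0 < s.re) (h2 : s ≠ 1) :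
    ∃ M : ℝ, 0 < M ∧ ∀ k : ℕ, 2 ≤ k →
      ‖riemannZeta s - ∑ n ∈ Finset.Icc 1 (k - 1), (n : ℂ) ^ (-s)
          + (k : ℂ) ^ (1 - s) / (1 - s) - (1 / 2) * (k : ℂ) ^ (-s)‖
        ≤ M * (k : ℝ) ^ (-s.re - 1) := by
  refine ⟨‖s‖ * ‖s + 1‖ * (1 + 1 / (s.re + 1)) + 1, by positivity, ?_⟩
  intro k hk
  have hζ : riemannZeta s = Zk s k - Tt s k := by
    rw [zeta_eq_W_on s h1 h2, ZT_const s h2 h1 k hk]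
  have hexpr : riemannZeta s - ∑ n ∈ Finset.Icc 1 (k - 1), (n : ℂ) ^ (-s)
      + (k : ℂ) ^ (1 - s) / (1 - s) - (1 / 2) * (k : ℂ) ^ (-s) = -(Tt s k) := by
    rw [hζ, Zk]; ring
  rw [hexpr, norm_neg]
  have hb := T_bound s h2 h1 k (by omega)
  have hrp : (0 : ℝ) ≤ (k : ℝ) ^ (-s.re - 1) := Real.rpow_nonneg (by positivity) _
  nlinarith [hb, hrp]
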